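/- Let R be a graded ring with R_0 = k a field, and let I ⊆ R be a finitely generated homogeneous ideal. Then I has a generating set g_1,...,g_r of homogeneous elements such that for each 1 ≤ k ≤ r, the strength of g_k equals the collective strength of g_1,...,g_k. -/

import Mathlib

variable {k R : Type*}

/-- `f` admits a decomposition `f = Σ_{i=1}^{n} g_i h_i` with all `g_i, h_i`
homogeneous of positive degree. -/
def HasStrengthDecomp [Field k] [CommRing R] [Algebra k R] (𝒜 : ℕ → Submodule k R)
    (f : R) (n : ℕ) : Prop :=
  ∃ g h : Fin n → R,
    (∀ i, ∃ d : ℕ, 0 < d ∧ g i ∈ 𝒜 d) ∧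
    (∀ i, ∃ d : ℕ, 0 < d ∧ h i ∈ 𝒜 d) ∧
    f = ∑ i, g i * h i

/-- The strength of `f`: the minimal `s ≥ -1` such that `f = Σ_{i=1}^{s+1} g_i h_i`
with all `g_i, h_i` homogeneous of positive degree, or `∞` if there is no such
decomposition.  It is valued in `WithBot ℕ∞`, where `⊥` plays the role of `-1`
(the strength of `0`) and `⊤` is `∞`. -/
noncomputable def strength [Field k] [CommRing R] [Algebra k R] (𝒜 : ℕ → Submodule k R)
    (f : R) : WithBot ℕ∞ :=
  sInf ((fun n : ℕ => if n = 0 then (⊥ : WithBot ℕ∞) else (((n - 1 : ℕ) : ℕ∞) : WithBot ℕ∞))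
    '' {n : ℕ | HasStrengthDecomp 𝒜 f n})

/-- The collective strength of `f_1, ..., f_m`: the minimal strength of a nontrivial
homogeneous `k`-linear combination of the `f_i`. -/
noncomputable def collectiveStrength [Field k] [CommRing R] [Algebra k R]
    (𝒜 : ℕ → Submodule k R) {m : ℕ} (f : Fin m → R) : WithBot ℕ∞ :=
  sInf (strength 𝒜 ''
    {x : R | (∃ a : Fin m → k, a ≠ 0 ∧ x = ∑ i, a i • f i) ∧ ∃ d : ℕ, x ∈ 𝒜 d})

/-!
Start from finitely many homogeneous generators `f_1, …, f_n` (homogeneous components of any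
finite generating set). Among the homogeneous nontrivial `k`-combinations of the `f_i`, pick one,
`x = ∑ aᵢ fᵢ`, of minimal strength; its strength is the collective strength of the family. If
`aᵢ ≠ 0`, replacing `fᵢ` by `x` and moving it to the end preserves the `k`-span, and the
remaining `n - 1` generators are treated by induction. This works because the collective strength
of a family of given length depends only on its `k`-span: the set of its nontrivial combinations
is the span, with `0` removed exactly when the family is linearly independent.
-/

open Set

theorem Ideal.IsHomogeneous.exists_fin_homogeneous_generators {ι σ A : Type*}
    [DecidableEq ι] [AddMonoid ι] [CommRing A] [SetLike σ A] [AddSubmonoidClass σ A]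
    {𝒜 : ι → σ} [GradedRing 𝒜]
    {I : Ideal A} (hI : I.IsHomogeneous 𝒜) (hfg : I.FG) :
    ∃ (n : ℕ) (f : Fin n → A), (∀ j, SetLike.IsHomogeneousElem 𝒜 (f j)) ∧
      Ideal.span (range f) = I := by
  classical
  obtain ⟨S, rfl⟩ := hfg
  set G := S.biUnion fun s => (DirectSum.decompose 𝒜 s).support.image
    fun i => (DirectSum.decompose 𝒜 s i : A)
  have mem_G : ∀ x ∈ G, ∃ s ∈ S, ∃ i, x = DirectSum.decompose 𝒜 s i := by
    simp only [G, Finset.mem_biUnion, Finset.mem_image]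
    rintro x ⟨s, hs, i, -, rfl⟩
    exact ⟨s, hs, i, rfl⟩
  obtain ⟨n, f, hf⟩ := G.finite_toSet.fin_embedding
  refine ⟨n, f, fun j => ?_, ?_⟩
  · obtain ⟨s, -, i, hi⟩ := mem_G _ (hf ▸ mem_range_self j)
    exact ⟨i, hi ▸ SetLike.coe_mem _⟩
  refine hf ▸ le_antisymm (Ideal.span_le.mpr fun x hx => ?_) (Ideal.span_le.mpr fun s hs => ?_)
  · obtain ⟨s, hs, i, rfl⟩ := mem_G x hx
    exact hI i (Ideal.subset_span hs)
  · rw [SetLike.mem_coe, ← DirectSum.sum_support_decompose 𝒜 s]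
    refine Ideal.sum_mem _ fun i hi => Ideal.subset_span ?_
    simp only [G, Finset.coe_biUnion, Finset.coe_image, mem_iUnion, mem_image]
    exact ⟨s, hs, i, hi, rfl⟩

theorem Ideal.span_eq_of_span_eq (k : Type*) {R : Type*} [CommSemiring k] [CommSemiring R]
    [Algebra k R] {s t : Set R} (h : Submodule.span k s = Submodule.span k t) :
    Ideal.span s = Ideal.span t := by
  rw [Ideal.span, ← Submodule.span_span_of_tower k R s, h, Submodule.span_span_of_tower]

open Submodule

section Combinations

variable {K M ι : Type*} [Field K] [AddCommGroup M] [Module K M] [Fintype ι]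

theorem span_range_snoc_succAbove_sum_smul {n : ℕ} (f : Fin (n + 1) → M) {a : Fin (n + 1) → K}
    {i : Fin (n + 1)} (hi : a i ≠ 0) :
    span K (range (Fin.snoc (f ∘ i.succAbove) (∑ j, a j • f j))) = span K (range f) := by
  set y := ∑ j, a (i.succAbove j) • f (i.succAbove j)
  have hsum : ∑ j, a j • f j = a i • f i + y := Fin.sum_univ_succAbove _ i
  rw [Fin.range_snoc]
  refine le_antisymm (span_le.mpr (insert_subset_iff.mpr ⟨?_, ?_⟩)) (span_le.mpr ?_)
  · exact sum_mem fun j _ => smul_mem _ _ (subset_span (mem_range_self j))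
  · exact (range_comp_subset_range _ f).trans subset_span
  rintro _ ⟨j, rfl⟩
  induction j using Fin.succAboveCases i with
  | x =>
    have hfi : f i = (a i)⁻¹ • ((∑ j, a j • f j) - y) := by
      rw [hsum, add_sub_cancel_right, smul_smul, inv_mul_cancel₀ hi, one_smul]
    rw [hfi]
    refine smul_mem _ _ (sub_mem (subset_span (mem_insert _ _)) (sum_mem fun j _ => ?_))
    exact smul_mem _ _ (subset_span (mem_insert_of_mem _ (mem_range_self j)))
  | p j => exact subset_span (mem_insert_of_mem _ (mem_range_self j))

variable (K) in
def nontrivialCombinations (f : ι → M) : Set M :=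
  {x | ∃ a : ι → K, a ≠ 0 ∧ x = ∑ i, a i • f i}

theorem mem_nontrivialCombinations_self [DecidableEq ι] (f : ι → M) (i : ι) :
    f i ∈ nontrivialCombinations K f :=
  ⟨Pi.single i 1, by simp, by simp [Pi.single_apply]⟩

open Classical in
theorem nontrivialCombinations_eq (f : ι → M) :
    nontrivialCombinations K f =
      if LinearIndependent K f then (span K (range f) : Set M) \ {0} else span K (range f) := by
  ext x
  simp only [nontrivialCombinations]
  split_ifs with hf
  · refine ⟨?_, fun ⟨hx, hx0⟩ => ?_⟩
    · rintro ⟨a, ha, rfl⟩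
      refine ⟨mem_span_range_iff_exists_fun K |>.mpr ⟨a, rfl⟩, fun h0 => ha ?_⟩
      exact funext (Fintype.linearIndependent_iff.mp hf a h0)
    · obtain ⟨a, rfl⟩ := mem_span_range_iff_exists_fun K |>.mp hx
      exact ⟨a, by rintro rfl; simp at hx0, rfl⟩
  · refine ⟨fun ⟨a, _, hx⟩ => ?_, fun hx => ?_⟩
    · exact mem_span_range_iff_exists_fun K |>.mpr ⟨a, hx.symm⟩
    obtain ⟨a, rfl⟩ := mem_span_range_iff_exists_fun K |>.mp hx
    by_cases ha : a = 0
    · obtain ⟨c, hc, i, hi⟩ := Fintype.not_linearIndependent_iff.mp hf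
      exact ⟨c, fun h => hi (congrFun h i), by simp [ha, hc]⟩
    · exact ⟨a, ha, rfl⟩

theorem nontrivialCombinations_eq_of_span_eq {f g : ι → M}
    (h : span K (range f) = span K (range g)) :
    nontrivialCombinations K f = nontrivialCombinations K g := by
  have hli : LinearIndependent K f ↔ LinearIndependent K g := by
    rw [linearIndependent_iff_card_eq_finrank_span, linearIndependent_iff_card_eq_finrank_span,
      Set.finrank, Set.finrank, h]
  classical
  rw [nontrivialCombinations_eq, nontrivialCombinations_eq, h]
  exact if_congr hli rfl rfl

end Combinations

section Strength

variable [Field k] [CommRing R] [Algebra k R] (𝒜 : ℕ → Submodule k R)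

theorem collectiveStrength_def {m : ℕ} (f : Fin m → R) :
    collectiveStrength 𝒜 f =
      sInf (strength 𝒜 '' {x | x ∈ nontrivialCombinations k f ∧ ∃ d, x ∈ 𝒜 d}) :=
  rfl

theorem collectiveStrength_eq_of_span_eq {m : ℕ} {f g : Fin m → R}
    (h : span k (range f) = span k (range g)) :
    collectiveStrength 𝒜 f = collectiveStrength 𝒜 g := by
  rw [collectiveStrength_def, collectiveStrength_def, nontrivialCombinations_eq_of_span_eq h]

theorem exists_strength_eq_collectiveStrength {m : ℕ} (f : Fin m → R)
    (hf : {x | x ∈ nontrivialCombinations k f ∧ ∃ d, x ∈ 𝒜 d}.Nonempty) :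
    ∃ x ∈ nontrivialCombinations k f,
      (∃ d, x ∈ 𝒜 d) ∧ strength 𝒜 x = collectiveStrength 𝒜 f := by
  obtain ⟨x, hx, hx'⟩ := csInf_mem (hf.image (strength 𝒜))
  exact ⟨x, hx.1, hx.2, hx'⟩

theorem Fin.take_snoc_castSucc {α : Type*} {n : ℕ} (g : Fin n → α) (x : α) (j : Fin n) :
    Fin.take (α := fun _ => α) (j + 1) (Fin.castSucc j).isLt (Fin.snoc g x) =
      Fin.take (α := fun _ => α) (j + 1) j.isLt g :=
  funext fun i => Fin.snoc_castSucc (α := fun _ => α) x g (Fin.castLE j.isLt i)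

theorem exists_homogeneous_strength_eq_collectiveStrength_take (n : ℕ) (f : Fin n → R)
    (hf : ∀ i, ∃ d, f i ∈ 𝒜 d) :
    ∃ g : Fin n → R, (∀ i, ∃ d, g i ∈ 𝒜 d) ∧ span k (range g) = span k (range f) ∧
      ∀ j : Fin n, strength 𝒜 (g j) = collectiveStrength 𝒜 (Fin.take (j + 1) j.isLt g) := by
  induction n with
  | zero => exact ⟨f, hf, rfl, fun j => j.elim0⟩
  | succ n ih =>
    obtain ⟨x, ⟨a, ha, rfl⟩, hx, hx_min⟩ := exists_strength_eq_collectiveStrength 𝒜 f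
      ⟨f 0, mem_nontrivialCombinations_self f 0, hf 0⟩
    obtain ⟨i, hi⟩ := Function.ne_iff.mp ha
    obtain ⟨g, hg, hg_span, hg_str⟩ := ih (f ∘ i.succAbove) fun j => hf _
    have h_span : span k (range (Fin.snoc g (∑ j, a j • f j))) = span k (range f) := by
      rw [Fin.range_snoc, span_insert, hg_span, ← span_insert, ← Fin.range_snoc]
      exact span_range_snoc_succAbove_sum_smul f hi
    refine ⟨Fin.snoc g _, Fin.lastCases ?_ fun j => ?_, h_span, Fin.lastCases ?_ fun j => ?_⟩
    · simpa using hx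
    · simpa using hg j
    · rw [Fin.snoc_last, hx_min]
      exact (collectiveStrength_eq_of_span_eq 𝒜 h_span).symm
    · rw [Fin.snoc_castSucc, hg_str j]
      exact congrArg (collectiveStrength 𝒜) (Fin.take_snoc_castSucc g _ j).symm

end Strength

theorem exists_generators_strength_eq_collectiveStrength_general
    [Field k] [CommRing R] [Algebra k R] (𝒜 : ℕ → Submodule k R) [GradedAlgebra 𝒜]
    (I : Ideal R) (hfg : I.FG) (hhom : Ideal.IsHomogeneous 𝒜 I) :
    ∃ (r : ℕ) (g : Fin r → R),
      (∀ i, ∃ d : ℕ, g i ∈ 𝒜 d) ∧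
      Ideal.span (Set.range g) = I ∧
      ∀ j : Fin r, strength 𝒜 (g j) =
        collectiveStrength 𝒜 (fun i : Fin ((j : ℕ) + 1) => g (Fin.castLE j.isLt i)) := by
  obtain ⟨n, f, hf, hf_span⟩ := hhom.exists_fin_homogeneous_generators hfg
  obtain ⟨g, hg, hg_span, hg_str⟩ :=
    exists_homogeneous_strength_eq_collectiveStrength_take 𝒜 n f hf
  exact ⟨n, g, hg, (Ideal.span_eq_of_span_eq k hg_span).trans hf_span, hg_str⟩

/-- **Lemma (Erman–Sam–Snowden, Lemma 2.1).**
Let `R` be a graded ring with `R₀ = k` a field.  Every finitely generated homogeneous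
ideal `I ⊆ R` has a generating set `g_1, ..., g_r` of homogeneous elements such that,
for each `1 ≤ j ≤ r`, the strength of `g_j` equals the collective strength of
`g_1, ..., g_j`. -/
theorem exists_generators_strength_eq_collectiveStrength
    [Field k] [CommRing R] [Algebra k R] (𝒜 : ℕ → Submodule k R) [GradedAlgebra 𝒜]
    (h0 : ∀ x ∈ 𝒜 0, ∃ c : k, algebraMap k R c = x)
    (I : Ideal R) (hfg : I.FG) (hhom : Ideal.IsHomogeneous 𝒜 I) :
    ∃ (r : ℕ) (g : Fin r → R),
      (∀ i, ∃ d : ℕ, g i ∈ 𝒜 d) ∧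
      Ideal.span (Set.range g) = I ∧
      ∀ j : Fin r, strength 𝒜 (g j) =
        collectiveStrength 𝒜 (fun i : Fin ((j : ℕ) + 1) => g (Fin.castLE j.isLt i)) :=
  exists_generators_strength_eq_collectiveStrength_general 𝒜 I hfg hhom
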